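/- arXiv:1407.4777 — 5 statements merged into one kernel-verified Lean document; each statement's English description precedes it below -/
import Mathlib

section
/- Let S be a finite index set with n = |S| ≥ 1, let Q and Q′ be substochastic S×S real matrices, let f, f′ : S → ℝ be vectors with nonnegative entries, and let α ∈ [0,1]. Assume: (i) |Q′(s,t) − Q(s,t)| ≤ α for all s,t ∈ S; (ii) f′(s) ≤ f(s) + α for all s ∈ S; (iii) the matrices I−Q and I−Q′ are invertible and (I−Q′)⁻¹ has nonnegative entries; and (iv) α·‖(I−Q)⁻¹‖·n ≤ 1/2. Set S₀ = ‖(I−Q)⁻¹‖ and C = ‖(I−Q)⁻¹ · f‖_∞. Then for every s ∈ S, the s-component of (I−Q′)⁻¹ · f′ is at most the s-component of (I−Q)⁻¹ · f plus 2·α·S₀·(1 + C·n). -/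
attribute [local instance] Matrix.linftyOpNormedRing

/-!
The resolvent identity `(I - Q')⁻¹ - (I - Q)⁻¹ = (I - Q')⁻¹ (Q' - Q) (I - Q)⁻¹` does all the
work. Since `‖Q' - Q‖ ≤ n α`, the smallness assumption makes the correction at most half of
`‖(I - Q')⁻¹‖`, whence `‖(I - Q')⁻¹‖ ≤ 2 S₀`. Replacing `f'` by `f + α` (allowed because
`(I - Q')⁻¹ ≥ 0`) costs at most `α ‖(I - Q')⁻¹‖`, and replacing `(I - Q')⁻¹ f` by `(I - Q)⁻¹ f`
costs at most `‖(I - Q')⁻¹‖ · n α · C`, again by the resolvent identity.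
-/

open Finset

namespace Matrix

variable {m n : Type*} [Fintype m] [Fintype n]

section Rectangular

attribute [local instance] Matrix.linftyOpSeminormedAddCommGroup

theorem sum_norm_le_linfty_opNorm {α : Type*} [SeminormedAddCommGroup α] (A : Matrix m n α)
    (i : m) : ∑ j, ‖A i j‖ ≤ ‖A‖ := by
  have h : ∑ j, ‖A i j‖₊ ≤ ‖A‖₊ :=
    linfty_opNNNorm_def A ▸ Finset.le_sup (f := fun i => ∑ j, ‖A i j‖₊) (mem_univ i)
  simpa only [← NNReal.coe_le_coe, NNReal.coe_sum, coe_nnnorm] using h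

theorem linfty_opNorm_le_card_mul {α : Type*} [SeminormedAddCommGroup α] {A : Matrix m n α}
    {a : ℝ} (ha : 0 ≤ a) (h : ∀ i j, ‖A i j‖ ≤ a) : ‖A‖ ≤ Fintype.card n * a := by
  lift a to NNReal using ha
  have h' : ‖A‖₊ ≤ Fintype.card n * a := by
    rw [linfty_opNNNorm_def]
    exact Finset.sup_le fun i _ =>
      (sum_le_sum fun j _ => (by exact_mod_cast h i j : ‖A i j‖₊ ≤ a)).trans_eq (by simp)
  exact_mod_cast h'

theorem mulVec_apply_le_add_mul_linfty_opNorm {M : Matrix m n ℝ} (hM : ∀ i j, 0 ≤ M i j)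
    {f g : n → ℝ} {c : ℝ} (hc : 0 ≤ c) (hgf : ∀ j, g j ≤ f j + c) (i : m) :
    (M *ᵥ g) i ≤ (M *ᵥ f) i + c * ‖M‖ :=
  calc (M *ᵥ g) i ≤ ∑ j, M i j * (f j + c) :=
        sum_le_sum fun j _ => mul_le_mul_of_nonneg_left (hgf j) (hM i j)
    _ = (M *ᵥ f) i + c * ∑ j, M i j := by
        simp only [mulVec, dotProduct, mul_add, sum_add_distrib, ← sum_mul, mul_comm c]
    _ ≤ (M *ᵥ f) i + c * ‖M‖ := by
        gcongr
        exact (sum_le_sum fun j _ => le_abs_self (M i j)).trans (sum_norm_le_linfty_opNorm M i)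

end Rectangular

variable [DecidableEq n] {R : Type*} [NormedCommRing R] {A B : Matrix n n R}

theorem norm_inv_sub_inv_le (h : IsUnit A ↔ IsUnit B) :
    ‖A⁻¹ - B⁻¹‖ ≤ ‖A⁻¹‖ * ‖B - A‖ * ‖B⁻¹‖ := by
  rw [inv_sub_inv h]
  exact (norm_mul_le _ _).trans (by gcongr; exact norm_mul_le _ _)

theorem norm_inv_mulVec_sub_inv_mulVec_le (h : IsUnit A ↔ IsUnit B) (v : n → R) :
    ‖A⁻¹ *ᵥ v - B⁻¹ *ᵥ v‖ ≤ ‖A⁻¹‖ * ‖B - A‖ * ‖B⁻¹ *ᵥ v‖ := by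
  rw [← sub_mulVec, inv_sub_inv h, ← mulVec_mulVec, ← mulVec_mulVec, mul_assoc]
  exact (linfty_opNorm_mulVec _ _).trans <| by
    gcongr
    exact linfty_opNorm_mulVec _ _

theorem norm_inv_le_two_mul (h : IsUnit A ↔ IsUnit B) (hsmall : ‖B⁻¹‖ * ‖B - A‖ ≤ 1 / 2) :
    ‖A⁻¹‖ ≤ 2 * ‖B⁻¹‖ := by
  have hdiff : ‖A⁻¹‖ - ‖B⁻¹‖ ≤ ‖A⁻¹‖ * ‖B - A‖ * ‖B⁻¹‖ :=
    (norm_sub_norm_le _ _).trans (norm_inv_sub_inv_le h)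
  nlinarith [mul_le_mul_of_nonneg_left hsmall (norm_nonneg A⁻¹)]

end Matrix

open Matrix

theorem perturbation_cost_bound_general {S : Type*} [Fintype S] [DecidableEq S]
    (Q Q' : Matrix S S ℝ) (f f' : S → ℝ) (α : ℝ)
    (hα : α ∈ Set.Icc (0 : ℝ) 1)
    (hdiff : ∀ s t, |Q' s t - Q s t| ≤ α)
    (hfdiff : ∀ s, f' s ≤ f s + α)
    (hinv : IsUnit (1 - Q)) (hinv' : IsUnit (1 - Q'))
    (hpos : ∀ s t, 0 ≤ (1 - Q')⁻¹ s t)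
    (hsmall : α * ‖(1 - Q)⁻¹‖ * (Fintype.card S : ℝ) ≤ 1 / 2) :
    ∀ s, (1 - Q')⁻¹.mulVec f' s ≤
      (1 - Q)⁻¹.mulVec f s +
        2 * α * ‖(1 - Q)⁻¹‖ * (1 + ‖(1 - Q)⁻¹.mulVec f‖ * (Fintype.card S : ℝ)) := by
  intro s
  have hunits : IsUnit (1 - Q') ↔ IsUnit (1 - Q) := iff_of_true hinv' hinv
  have hsub : (1 - Q) - (1 - Q') = Q' - Q := sub_sub_sub_cancel_left _ _ _
  have hE : ‖Q' - Q‖ ≤ Fintype.card S * α :=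
    linfty_opNorm_le_card_mul hα.1 fun i j => by
      rw [Matrix.sub_apply, Real.norm_eq_abs]; exact hdiff i j
  have hnorm : ‖(1 - Q')⁻¹‖ ≤ 2 * ‖(1 - Q)⁻¹‖ :=
    norm_inv_le_two_mul hunits <| hsub ▸
      (mul_le_mul_of_nonneg_left hE (norm_nonneg _)).trans (by linarith)
  have hcost : ((1 - Q')⁻¹ *ᵥ f') s ≤ ((1 - Q')⁻¹ *ᵥ f) s + α * ‖(1 - Q')⁻¹‖ :=
    mulVec_apply_le_add_mul_linfty_opNorm hpos hα.1 hfdiff s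
  have hresolvent : ((1 - Q')⁻¹ *ᵥ f) s - ((1 - Q)⁻¹ *ᵥ f) s ≤
      ‖(1 - Q')⁻¹‖ * (Fintype.card S * α) * ‖(1 - Q)⁻¹ *ᵥ f‖ :=
    calc _ ≤ ‖(1 - Q')⁻¹ *ᵥ f - (1 - Q)⁻¹ *ᵥ f‖ :=
          (Real.le_norm_self _).trans
            (norm_le_pi_norm ((1 - Q')⁻¹ *ᵥ f - (1 - Q)⁻¹ *ᵥ f) s)
      _ ≤ ‖(1 - Q')⁻¹‖ * ‖Q' - Q‖ * ‖(1 - Q)⁻¹ *ᵥ f‖ :=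
          hsub ▸ norm_inv_mulVec_sub_inv_mulVec_le hunits f
      _ ≤ _ := by gcongr
  set w := α * (1 + ‖(1 - Q)⁻¹ *ᵥ f‖ * Fintype.card S) with hw
  have hw0 : 0 ≤ w := mul_nonneg hα.1 (by positivity)
  calc ((1 - Q')⁻¹ *ᵥ f') s ≤ ((1 - Q)⁻¹ *ᵥ f) s + ‖(1 - Q')⁻¹‖ * w := by rw [hw]; linarith
    _ ≤ ((1 - Q)⁻¹ *ᵥ f) s + 2 * ‖(1 - Q)⁻¹‖ * w := by gcongr
    _ = _ := by rw [hw]; ring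

/-- Perturbation lemma in matrix form: if the substochastic matrix `Q'` and the
nonnegative cost vector `f'` are `α`-close to `Q` and `f`, then the expected total
accumulated cost `(I - Q')⁻¹ ⬝ f'` exceeds `(I - Q)⁻¹ ⬝ f` by at most
`2·α·S₀·(1 + C·n)`, where `S₀ = ‖(I - Q)⁻¹‖` and `C = ‖(I - Q)⁻¹ ⬝ f‖_∞`. -/
theorem perturbation_cost_bound {S : Type*} [Fintype S] [DecidableEq S]
    (hn : 1 ≤ Fintype.card S)
    (Q Q' : Matrix S S ℝ) (f f' : S → ℝ) (α : ℝ)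
    (hQ0 : ∀ s t, 0 ≤ Q s t) (hQ1 : ∀ s, ∑ t, Q s t ≤ 1)
    (hQ'0 : ∀ s t, 0 ≤ Q' s t) (hQ'1 : ∀ s, ∑ t, Q' s t ≤ 1)
    (hf : ∀ s, 0 ≤ f s) (hf' : ∀ s, 0 ≤ f' s)
    (hα : α ∈ Set.Icc (0 : ℝ) 1)
    (hdiff : ∀ s t, |Q' s t - Q s t| ≤ α)
    (hfdiff : ∀ s, f' s ≤ f s + α)
    (hinv : IsUnit (1 - Q)) (hinv' : IsUnit (1 - Q'))
    (hpos : ∀ s t, 0 ≤ (1 - Q')⁻¹ s t)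
    (hsmall : α * ‖(1 - Q)⁻¹‖ * (Fintype.card S : ℝ) ≤ 1 / 2) :
    ∀ s, (1 - Q')⁻¹.mulVec f' s ≤
      (1 - Q)⁻¹.mulVec f s +
        2 * α * ‖(1 - Q)⁻¹‖ * (1 + ‖(1 - Q)⁻¹.mulVec f‖ * (Fintype.card S : ℝ)) :=
  perturbation_cost_bound_general Q Q' f f' α hα hdiff hfdiff hinv hinv' hpos hsmall
end

section
/- Let Q be a substochastic real matrix over a finite index set, and suppose there exist a natural number m ≥ 1 and a real p ∈ (0,1] such that ‖Q^m‖ ≤ 1 − p. Then I − Q is invertible and ‖(I − Q)⁻¹‖ ≤ m/p. -/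
/-!
Factor `1 - Q ^ m = (1 - Q) * ∑_{i<m} Q ^ i`, the two factors commuting. As `‖Q ^ m‖ ≤ 1 - p < 1`,
the Neumann series inverts `1 - Q ^ m` with norm at most `1 / p`, so `1 - Q` is a unit with inverse
`(∑_{i<m} Q ^ i) * (1 - Q ^ m)⁻¹`; substochasticity gives `‖Q ^ i‖ ≤ 1`, so the sum has norm at most `m`.
-/

attribute [local instance] Matrix.linftyOpNormedRing

open Finset

section Ring

variable {R : Type*} [Ring R] {x : R} {m : ℕ}

lemma commute_one_sub_geom_sum (x : R) (m : ℕ) : Commute (1 - x) (∑ i ∈ range m, x ^ i) :=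
  (mul_neg_geom_sum x m).trans (geom_sum_mul_neg x m).symm

lemma isUnit_one_sub_of_isUnit_one_sub_pow (h : IsUnit (1 - x ^ m)) : IsUnit (1 - x) := by
  rw [← mul_neg_geom_sum, (commute_one_sub_geom_sum x m).isUnit_mul_iff] at h
  exact h.1

lemma ringInverse_one_sub_eq_geom_sum_mul (h : IsUnit (1 - x ^ m)) :
    Ring.inverse (1 - x) = (∑ i ∈ range m, x ^ i) * Ring.inverse (1 - x ^ m) :=
  calc Ring.inverse (1 - x) = Ring.inverse (1 - x) * ((1 - x ^ m) * Ring.inverse (1 - x ^ m)) := by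
        rw [Ring.mul_inverse_cancel _ h, mul_one]
    _ = Ring.inverse (1 - x) * (1 - x) * (∑ i ∈ range m, x ^ i) * Ring.inverse (1 - x ^ m) := by
        rw [← mul_neg_geom_sum x m]; noncomm_ring
    _ = (∑ i ∈ range m, x ^ i) * Ring.inverse (1 - x ^ m) := by
        rw [Ring.inverse_mul_cancel _ (isUnit_one_sub_of_isUnit_one_sub_pow h), one_mul]

end Ring

section NormedRing

variable {R : Type*} [NormedRing R] {x : R}

lemma norm_pow_le_one_of_norm_le_one (h1 : ‖(1 : R)‖ ≤ 1) (hx : ‖x‖ ≤ 1) (k : ℕ) :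
    ‖x ^ k‖ ≤ 1 := by
  induction k with
  | zero => simpa using h1
  | succ k ih =>
    calc ‖x ^ (k + 1)‖ ≤ ‖x ^ k‖ * ‖x‖ := by rw [pow_succ]; exact norm_mul_le _ _
      _ ≤ 1 := mul_le_one₀ ih (norm_nonneg x) hx

lemma norm_geom_sum_le (h1 : ‖(1 : R)‖ ≤ 1) (hx : ‖x‖ ≤ 1) (m : ℕ) :
    ‖∑ i ∈ range m, x ^ i‖ ≤ m :=
  calc ‖∑ i ∈ range m, x ^ i‖ ≤ ∑ i ∈ range m, ‖x ^ i‖ := norm_sum_le _ _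
    _ ≤ ∑ _i ∈ range m, (1 : ℝ) := sum_le_sum fun i _ ↦ norm_pow_le_one_of_norm_le_one h1 hx i
    _ = m := by simp

variable [HasSummableGeomSeries R]

lemma norm_ringInverse_one_sub_le (h1 : ‖(1 : R)‖ ≤ 1) (hx : ‖x‖ < 1) :
    ‖Ring.inverse (1 - x)‖ ≤ (1 - ‖x‖)⁻¹ := by
  rw [← geom_series_eq_inverse x hx]
  linarith [tsum_geometric_le_of_norm_lt_one x hx]

theorem isUnit_one_sub_and_norm_ringInverse_le (h1 : ‖(1 : R)‖ ≤ 1) (hx : ‖x‖ ≤ 1) {m : ℕ} {p : ℝ}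
    (hp : 0 < p) (hxm : ‖x ^ m‖ ≤ 1 - p) :
    IsUnit (1 - x) ∧ ‖Ring.inverse (1 - x)‖ ≤ m / p := by
  have hxm_lt : ‖x ^ m‖ < 1 := by linarith
  have hunit := isUnit_one_sub_of_norm_lt_one hxm_lt
  refine ⟨isUnit_one_sub_of_isUnit_one_sub_pow hunit, ?_⟩
  have hinv : ‖Ring.inverse (1 - x ^ m)‖ ≤ p⁻¹ :=
    (norm_ringInverse_one_sub_le h1 hxm_lt).trans (inv_anti₀ hp (by linarith))
  calc ‖Ring.inverse (1 - x)‖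
      ≤ ‖∑ i ∈ range m, x ^ i‖ * ‖Ring.inverse (1 - x ^ m)‖ := by
        rw [ringInverse_one_sub_eq_geom_sum_mul hunit]; exact norm_mul_le _ _
    _ ≤ m * p⁻¹ := by gcongr; exact norm_geom_sum_le h1 hx m
    _ = m / p := (div_eq_mul_inv _ _).symm

end NormedRing

namespace Matrix

variable {n : Type*} [Fintype n] [DecidableEq n]

-- The ℓ∞-operator norm induces the product uniformity only up to unfolding, so instance search
-- does not see that it is complete.
lemma linftyOp_hasSummableGeomSeries {α : Type*} [NormedRing α] [CompleteSpace α] :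
    HasSummableGeomSeries (Matrix n n α) :=
  @instHasSummableGeomSeriesOfCompleteSpace _ _ (inferInstanceAs (CompleteSpace (n → n → α)))

lemma linfty_opNorm_one_le {α : Type*} [NormedRing α] [NormOneClass α] :
    ‖(1 : Matrix n n α)‖ ≤ 1 := by
  rw [← diagonal_one, linfty_opNorm_diagonal]
  exact pi_norm_le_iff_of_nonneg zero_le_one |>.2 fun _ ↦ by simp

lemma linfty_opNorm_le_one_of_substochastic {Q : Matrix n n ℝ} (hQ0 : ∀ i j, 0 ≤ Q i j)
    (hQ1 : ∀ i, ∑ j, Q i j ≤ 1) : ‖Q‖ ≤ 1 := by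
  rw [← coe_nnnorm, NNReal.coe_le_one, linfty_opNNNorm_def, Finset.sup_le_iff]
  intro i _
  rw [← NNReal.coe_le_coe, NNReal.coe_sum]
  simpa [Real.norm_of_nonneg (hQ0 i _)] using hQ1 i

end Matrix

theorem fundamental_matrix_norm_bound_general {S : Type*} [Fintype S] [DecidableEq S]
    (Q : Matrix S S ℝ)
    (hQ0 : ∀ i j, 0 ≤ Q i j) (hQ1 : ∀ i, ∑ j, Q i j ≤ 1)
    (m : ℕ) (p : ℝ) (hp : p ∈ Set.Ioc (0 : ℝ) 1)
    (hnorm : ‖Q ^ m‖ ≤ 1 - p) :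
    IsUnit (1 - Q) ∧ ‖(1 - Q)⁻¹‖ ≤ (m : ℝ) / p := by
  have := Matrix.linftyOp_hasSummableGeomSeries (n := S) (α := ℝ)
  rw [Matrix.nonsing_inv_eq_ringInverse]
  exact isUnit_one_sub_and_norm_ringInverse_le Matrix.linfty_opNorm_one_le
    (Matrix.linfty_opNorm_le_one_of_substochastic hQ0 hQ1) hp.1 hnorm

/-- Bernoulli-trials bound on the fundamental matrix: if `Q` is substochastic and
`‖Q^m‖ ≤ 1 - p` for some `m ≥ 1` and `p ∈ (0,1]`, then `I - Q` is invertible and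
`‖(I - Q)⁻¹‖ ≤ m / p` (norms are maximum absolute row sums). -/
theorem fundamental_matrix_norm_bound {S : Type*} [Fintype S] [DecidableEq S]
    (Q : Matrix S S ℝ)
    (hQ0 : ∀ i j, 0 ≤ Q i j) (hQ1 : ∀ i, ∑ j, Q i j ≤ 1)
    (m : ℕ) (hm : 1 ≤ m) (p : ℝ) (hp : p ∈ Set.Ioc (0 : ℝ) 1)
    (hnorm : ‖Q ^ m‖ ≤ 1 - p) :
    IsUnit (1 - Q) ∧ ‖(1 - Q)⁻¹‖ ≤ (m : ℝ) / p :=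
  fundamental_matrix_norm_bound_general Q hQ0 hQ1 m p hp hnorm
end

section
/- For all real numbers a, b with 0 < a ≤ b, it holds that (e^{−b} − e^{−a})·(b·e^{−b}/(1 − e^{−b})) + (b·e^{−b} − a·e^{−a}) ≤ 0. -/
/-- Key inequality for inflating the delay of the minimal-value state of a bad sink:
for `0 < a ≤ b`,
`(e^{-b} - e^{-a})·(b·e^{-b}/(1 - e^{-b})) + (b·e^{-b} - a·e^{-a}) ≤ 0`. -/
theorem delay_inflation_ineq (a b : ℝ) (ha : 0 < a) (hab : a ≤ b) :
    (Real.exp (-b) - Real.exp (-a)) *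
        (b * Real.exp (-b) / (1 - Real.exp (-b))) +
      (b * Real.exp (-b) - a * Real.exp (-a)) ≤ 0 := by
  have hb : 0 < b := lt_of_lt_of_le ha hab
  set x := Real.exp (-a) with hx
  set y := Real.exp (-b) with hy
  have hxpos : 0 < x := Real.exp_pos _
  have hypos : 0 < y := Real.exp_pos _
  have hx1 : x < 1 := Real.exp_lt_one_iff.mpr (by linarith)
  have hy1 : y < 1 := Real.exp_lt_one_iff.mpr (by linarith)
  have hyx : y ≤ x := Real.exp_le_exp.mpr (by linarith)
  have h1y : (0:ℝ) < 1 - y := by linarith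
  -- key: b * (e^a - 1) ≤ a * (e^b - 1)
  have hea : x * Real.exp a = 1 := by
    rw [hx, ← Real.exp_add]; simp
  have heb : y * Real.exp b = 1 := by
    rw [hy, ← Real.exp_add]; simp
  have h1 : Real.exp a - 1 ≤ a * Real.exp a := by
    nlinarith [Real.add_one_le_exp (-a), Real.exp_pos a, hea,
      Real.exp_pos (-a)]
  have h2 : (b - a) + 1 ≤ Real.exp (b - a) := Real.add_one_le_exp _
  have hsplit : Real.exp a * Real.exp (b - a) = Real.exp b := by
    rw [← Real.exp_add]; ring_nf
  have t1 : (b - a) * (Real.exp a - 1) ≤ (b - a) * (a * Real.exp a) :=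
    mul_le_mul_of_nonneg_left h1 (by linarith)
  have t2 : a * Real.exp a * (b - a) ≤ a * Real.exp a * (Real.exp (b - a) - 1) :=
    mul_le_mul_of_nonneg_left (by linarith) (by positivity)
  have hsplit' : a * (Real.exp a * Real.exp (b - a)) = a * Real.exp b := by rw [hsplit]
  have hkey : b * (Real.exp a - 1) ≤ a * (Real.exp b - 1) := by
    nlinarith [t1, t2, hsplit']
  -- multiply hkey by x*y > 0 to get b*y*(1-x) ≤ a*x*(1-y)
  have key : b * y * (1 - x) ≤ a * x * (1 - y) := by
    have hm := mul_le_mul_of_nonneg_left hkey (mul_pos hxpos hypos).le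
    have l1 : x * y * (b * (Real.exp a - 1)) = b * y * (x * Real.exp a) - b * (x * y) := by
      ring
    have l2 : x * y * (a * (Real.exp b - 1)) = a * x * (y * Real.exp b) - a * (x * y) := by
      ring
    rw [hea, mul_one] at l1
    rw [heb, mul_one] at l2
    nlinarith [hm, l1, l2]
  have hnum : (y - x) * (b * y) + (b * y - a * x) * (1 - y) ≤ 0 := by
    nlinarith [key]
  have hrw : (y - x) * (b * y / (1 - y)) + (b * y - a * x)
      = ((y - x) * (b * y) + (b * y - a * x) * (1 - y)) / (1 - y) := by
    field_simp
  rw [hrw]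
  exact div_nonpos_of_nonpos_of_nonneg hnum h1y.le
end

section
/- For every integer k ≥ 7, 1 − e^{−k}·∑_{n=0}^{8k−1} k^n/n! ≤ 1/(17·k² + 1). -/
/-!
The tail `∑_{n ≥ m} x^n/n!` is dominated by a geometric series of ratio `x/(m+1)`, so for
`x = k`, `m = 8k` it is at most `(8/7)·k^{8k}/(8k)!`. Comparing with the single term
`(8k)^{8k}/(8k)! ≤ e^{8k}` of the exponential series bounds the Poisson tail by
`(8/7)·(e^7/8^8)^k`, which decays much faster than `1/(17k²+1)`.
-/

open Real Nat

theorem hasSum_pow_div_factorial_exp (x : ℝ) : HasSum (fun n ↦ x ^ n / n !) (exp x) := by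
  rw [exp_eq_exp_ℝ]; exact NormedSpace.expSeries_div_hasSum_exp x

theorem one_sub_exp_neg_mul_sum_range_eq (x : ℝ) (m : ℕ) :
    1 - exp (-x) * ∑ n ∈ Finset.range m, x ^ n / n ! =
      exp (-x) * ∑' j, x ^ (j + m) / (j + m)! := by
  have hsplit := (hasSum_pow_div_factorial_exp x).summable.sum_add_tsum_nat_add m
  rw [(hasSum_pow_div_factorial_exp x).tsum_eq] at hsplit
  have hone : exp (-x) * exp x = 1 := by rw [← exp_add, neg_add_cancel, exp_zero]
  rw [← hone, ← hsplit]
  ring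

theorem pow_add_div_factorial_le {x : ℝ} (hx : 0 ≤ x) (m j : ℕ) :
    x ^ (j + m) / (j + m)! ≤ x ^ m / m ! * (x / (m + 1)) ^ j := by
  have key : ((m ! * (m + 1) ^ j : ℕ) : ℝ) ≤ (m + j)! := by
    exact_mod_cast Nat.factorial_mul_pow_le_factorial
  calc x ^ (j + m) / (j + m)! ≤ x ^ (j + m) / (m ! * (m + 1) ^ j : ℕ) := by
        rw [add_comm j m]; gcongr
    _ = x ^ m / m ! * (x / (m + 1)) ^ j := by
        push_cast; rw [div_pow, pow_add]; field_simp

theorem tsum_pow_add_div_factorial_le {x r : ℝ} (hx : 0 ≤ x) (m : ℕ) (hxr : x / (m + 1) ≤ r)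
    (hr : r < 1) :
    ∑' j, x ^ (j + m) / (j + m)! ≤ x ^ m / m ! / (1 - r) := by
  have hr0 : 0 ≤ r := (by positivity : 0 ≤ x / (m + 1)).trans hxr
  have hgeom := (hasSum_geometric_of_lt_one hr0 hr).mul_left (x ^ m / m !)
  have htail := (summable_nat_add_iff m).mpr (hasSum_pow_div_factorial_exp x).summable
  refine hasSum_le (fun j ↦ ?_) htail.hasSum hgeom
  grw [pow_add_div_factorial_le hx, hxr]

theorem pow_div_factorial_le_exp_mul_div_pow {x c : ℝ} (hx : 0 ≤ x) (hc : 0 < c) (m : ℕ) :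
    x ^ m / m ! ≤ exp (c * x) / c ^ m := by
  have := Real.pow_div_factorial_le_exp (c * x) (by positivity) m
  rw [mul_pow, mul_div_assoc] at this
  rwa [le_div_iff₀' (by positivity)]

theorem exp_seven_div_eight_pow_eight_le : exp 7 / 8 ^ 8 ≤ 1 / 100 := by
  have h : exp 7 ≤ 3 ^ 7 := by
    rw [show exp 7 = exp 1 ^ 7 by rw [← exp_nat_mul]; norm_num]
    exact pow_le_pow_left₀ (exp_nonneg 1) exp_one_lt_three.le 7
  rw [div_le_iff₀ (by positivity)]
  linarith

theorem eight_div_seven_mul_pow_le {q : ℝ} (hq0 : 0 ≤ q) (hq : q ≤ 1 / 100) {k : ℕ}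
    (hk : k ≠ 0) :
    8 / 7 * q ^ k ≤ 1 / (17 * k ^ 2 + 1) := by
  have hsq : (17 * k ^ 2 + 1 : ℝ) ≤ 18 * 4 ^ k := by
    have hlt : k ^ 2 < 4 ^ k := by
      rw [show 4 = 2 ^ 2 by rfl, ← pow_mul, mul_comm, pow_mul]
      exact Nat.pow_lt_pow_left Nat.lt_two_pow_self two_ne_zero
    have hone : 1 ≤ 4 ^ k := Nat.one_le_pow _ _ (by norm_num)
    exact_mod_cast (by omega : 17 * k ^ 2 + 1 ≤ 18 * 4 ^ k)
  have hpow : (4 * q) ^ k ≤ 4 * q := pow_le_of_le_one (by positivity) (by linarith) hk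
  rw [le_div_iff₀ (by positivity)]
  calc 8 / 7 * q ^ k * (17 * k ^ 2 + 1) ≤ 8 / 7 * q ^ k * (18 * 4 ^ k) := by gcongr
    _ = 144 / 7 * (4 * q) ^ k := by rw [mul_pow]; ring
    _ ≤ 144 / 7 * (4 * q) := by gcongr
    _ ≤ 1 := by linarith

theorem poisson_upper_tail_le_general (k : ℕ) :
    1 - Real.exp (-(k : ℝ)) *
        ∑ n ∈ Finset.range (8 * k), (k : ℝ) ^ n / (Nat.factorial n : ℝ) ≤
      1 / (17 * (k : ℝ) ^ 2 + 1) := by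
  rcases eq_or_ne k 0 with rfl | hk
  · simp
  have hk0 : (0 : ℝ) ≤ k := k.cast_nonneg
  have hratio : (k : ℝ) / ((8 * k : ℕ) + 1) ≤ 1 / 8 := by
    rw [div_le_iff₀ (by positivity)]; push_cast; linarith
  rw [one_sub_exp_neg_mul_sum_range_eq]
  calc exp (-k) * ∑' j, (k : ℝ) ^ (j + 8 * k) / (j + 8 * k)!
      ≤ exp (-k) * ((k : ℝ) ^ (8 * k) / (8 * k)! / (1 - 1 / 8)) := by
        gcongr; exact tsum_pow_add_div_factorial_le hk0 _ hratio (by norm_num)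
    _ ≤ exp (-k) * (exp (8 * k) / 8 ^ (8 * k) / (1 - 1 / 8)) := by
        gcongr exp _ * (?_ / _)
        exact pow_div_factorial_le_exp_mul_div_pow (c := 8) hk0 (by norm_num) _
    _ = 8 / 7 * (exp 7 / 8 ^ 8) ^ k := by
        rw [div_pow, ← exp_nat_mul, ← pow_mul, mul_comm 8 k]
        field_simp
        rw [← exp_add]
        ring_nf
    _ ≤ 1 / (17 * k ^ 2 + 1) :=
        eight_div_seven_mul_pow_le (by positivity) exp_seven_div_eight_pow_eight_le hk

/-- For every integer `k ≥ 7`, the probability that a Poisson random variable with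
parameter `k` is at least `8k` satisfies
`1 - e^{-k}·∑_{n=0}^{8k-1} k^n/n! ≤ 1/(17·k² + 1)`. -/
theorem poisson_upper_tail_le (k : ℕ) (hk : 7 ≤ k) :
    1 - Real.exp (-(k : ℝ)) *
        ∑ n ∈ Finset.range (8 * k), (k : ℝ) ^ n / (Nat.factorial n : ℝ) ≤
      1 / (17 * (k : ℝ) ^ 2 + 1) :=
  poisson_upper_tail_le_general k
end

section
/- For every integer k ≥ 1, e^{−16k}·∑_{n=0}^{8k−1} (16k)^n/n! < 1/100. -/
/-! For `x ≥ 2m` the terms `xⁿ/n!` with `n ≤ m` at least double from one index to the next, so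
their sum over `n < m` is at most the last term `x^m/m!`. At `x = 2m` this term is
`2^m · m^m/m! ≤ 2^m e^m`, whence `e^{-2m} ∑_{n<m} (2m)ⁿ/n! ≤ (2/e)^m`; for `m = 8k ≥ 16` this is
below `(2/e)^16 < 1/100`. The case `k = 1` is too tight for this estimate (the probability is
`0.0099997…`) and is settled by evaluating the eight terms and bounding `e^16` from below. -/

open Finset Real Nat

theorem sum_range_le_of_two_mul_le {R : Type*} [Semiring R] [PartialOrder R] [IsOrderedRing R]
    {a : ℕ → R} (h0 : 0 ≤ a 0) :
    ∀ {m : ℕ}, (∀ n < m, 2 * a n ≤ a (n + 1)) → ∑ n ∈ range m, a n ≤ a m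
  | 0, _ => by simpa using h0
  | m + 1, h => by
    have ih : ∑ n ∈ range m, a n ≤ a m := sum_range_le_of_two_mul_le h0 fun n hn => h n (by omega)
    calc ∑ n ∈ range (m + 1), a n ≤ a m + a m := by rw [sum_range_succ]; gcongr
      _ = 2 * a m := (two_mul _).symm
      _ ≤ a (m + 1) := h m m.lt_succ_self

theorem sum_range_pow_div_factorial_le {x : ℝ} {m : ℕ} (hm : 2 * (m : ℝ) ≤ x) :
    ∑ n ∈ range m, x ^ n / n ! ≤ x ^ m / m ! := by
  refine sum_range_le_of_two_mul_le (by simp) fun n hn => ?_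
  have hn' : 2 * ((n : ℝ) + 1) ≤ x := by
    have : (n : ℝ) + 1 ≤ m := by exact_mod_cast hn
    linarith
  have hx : 0 ≤ x := by linarith [(n.cast_nonneg : (0 : ℝ) ≤ n)]
  have hterm : x ^ (n + 1) / (n + 1)! = x / (n + 1) * (x ^ n / n !) := by
    rw [pow_succ, factorial_succ]; push_cast; field_simp
  rw [hterm]
  gcongr
  rwa [le_div_iff₀ (by positivity)]

theorem exp_neg_two_mul_mul_sum_range_le (m : ℕ) :
    exp (-(2 * m)) * ∑ n ∈ range m, (2 * (m : ℝ)) ^ n / n ! ≤ (2 / exp 1) ^ m :=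
  calc exp (-(2 * m)) * ∑ n ∈ range m, (2 * (m : ℝ)) ^ n / n !
      ≤ exp (-(2 * m)) * (2 ^ m * ((m : ℝ) ^ m / m !)) := by
        rw [← mul_div_assoc, ← mul_pow]
        gcongr
        exact sum_range_pow_div_factorial_le le_rfl
    _ ≤ exp (-(2 * m)) * (2 ^ m * exp m) := by
        gcongr
        exact pow_div_factorial_le_exp _ m.cast_nonneg m
    _ = (2 / exp 1) ^ m := by
        have hexp : exp (-(2 * m)) * exp m * exp m = 1 := by
          rw [← exp_add, ← exp_add, ← exp_zero]; ring_nf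
        rw [div_pow, exp_one_pow, eq_div_iff (exp_pos _).ne']
        linear_combination 2 ^ m * hexp

theorem lt_exp_sixteen : (8885916 : ℝ) < exp 16 :=
  calc (8885916 : ℝ) < 2.7182818283 ^ 16 := by norm_num
    _ < exp 1 ^ 16 := by gcongr; exact exp_one_gt_d9
    _ = exp 16 := by rw [exp_one_pow]; norm_num

/-- For every integer `k ≥ 1`, the probability that a Poisson random variable with
parameter `16k` is strictly below `8k` satisfies
`e^{-16k}·∑_{n=0}^{8k-1} (16k)^n/n! < 1/100`. -/
theorem poisson_lower_tail_lt (k : ℕ) (hk : 1 ≤ k) :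
    Real.exp (-(16 * k : ℝ)) *
        ∑ n ∈ Finset.range (8 * k), (16 * (k : ℝ)) ^ n / (Nat.factorial n : ℝ) <
      1 / 100 := by
  obtain rfl | hk := hk.eq_or_lt
  · have hsum : ∑ n ∈ range (8 * 1), (16 * ((1 : ℕ) : ℝ)) ^ n / (n ! : ℝ) = 5598127 / 63 := by
      simp [sum_range_succ, factorial]
      norm_num
    rw [hsum, Nat.cast_one, mul_one, exp_neg, inv_mul_lt_iff₀ (exp_pos _)]
    linarith [lt_exp_sixteen]
  · have hcast : (16 * k : ℝ) = 2 * ((8 * k : ℕ) : ℝ) := by push_cast; ring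
    have hbase : 2 / exp 1 ≤ 1 := by
      rw [div_le_one (exp_pos 1)]; linarith [exp_one_gt_d9]
    calc exp (-(16 * k : ℝ)) * ∑ n ∈ range (8 * k), (16 * (k : ℝ)) ^ n / (n ! : ℝ)
        ≤ (2 / exp 1) ^ (8 * k) := by rw [hcast]; exact exp_neg_two_mul_mul_sum_range_le _
      _ ≤ (2 / exp 1) ^ 16 := pow_le_pow_of_le_one (by positivity) hbase (by omega)
      _ < 1 / 100 := by
        rw [div_pow, exp_one_pow, div_lt_div_iff₀ (exp_pos _) (by norm_num)]
        norm_num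
        linarith [lt_exp_sixteen]
end
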